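/- arXiv:2005.02306 — 3 statements merged into one kernel-verified Lean document; each statement's English description precedes it below -/
import Mathlib

section
/- Let k be a commutative noetherian domain and A a finitely generated unital k-algebra equipped with an anti-involution * (a k-linear map A → A with (ab)* = b*a* and (a*)* = a for all a,b ∈ A). Let M = ⊕_{i=1}^t A e_i be a faithful projective left A-module, where each e_i ∈ A is a nonzero idempotent with e_i* = e_i. Then the canonical ring homomorphism A → End_{End_A(M)}(M) (sending a to the map x ↦ a·x) is surjective if and only if for every pair of finitely generated projective left A-modules P₁, P₂ the natural map θ : Hom_A(P₁,P₂) → Hom_{End_A(M)}(Hom_A(M,P₁), Hom_A(M,P₂)), defined by θ(f)(h) = f ∘ h, is bijective. -/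
/-!
An anti-involution `σ` fixing the idempotents makes `M = ⊕ A eᵢ` self-dual: `Φ x y = ∑ yᵢ σ(xᵢ)`
identifies `M` with `Hom_A(M, A)`, and `End_A(M)` acquires an adjoint `s ↦ s†` with
`Φ (s x) = Φ x ∘ s†`. Transported along `Φ`, endomorphisms of `M` commuting with `End_A(M)` become
`End_A(M)`-linear endomorphisms of `Hom_A(M, A)`, and left multiplication by `a` becomes right
multiplication by `σ a`; so the double centralizer property says exactly that `θ` is surjective
for `P₁ = P₂ = A`. Surjectivity of `θ` passes to finite direct sums and to retracts, hence to all
finitely generated projectives. Injectivity holds whenever `P₂` is projective, because the trace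
ideal of `M` has zero right annihilator: if `Φ x y * c = 0` for all `x, y`, then `σ c` kills `M`.
-/

/-- The left `A`-module `M = ⊕_{i=1}^t A e_i`, where `A e_i` is the left ideal of `A`
generated by `e_i` (i.e. the `A`-span of `{e_i}` inside the left regular module `A`). -/
def DCPModule (A : Type) [Ring A] {t : ℕ} (e : Fin t → A) : Type :=
  (i : Fin t) → (Submodule.span A ({e i} : Set A))

instance (A : Type) [Ring A] {t : ℕ} (e : Fin t → A) : AddCommGroup (DCPModule A e) :=
  inferInstanceAs (AddCommGroup ((i : Fin t) → (Submodule.span A ({e i} : Set A))))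

instance (A : Type) [Ring A] {t : ℕ} (e : Fin t → A) : Module A (DCPModule A e) :=
  inferInstanceAs (Module A ((i : Fin t) → (Submodule.span A ({e i} : Set A))))

section HomFunctor

variable {A : Type*} [Ring A] (M : Type*) [AddCommGroup M] [Module A M]
variable {P₁ P₂ : Type*} [AddCommGroup P₁] [AddCommGroup P₂] [Module A P₁] [Module A P₂]

/-- The map `θ` of the statement. -/
def homMap (f : P₁ →ₗ[A] P₂) :
    { G : (M →ₗ[A] P₁) →+ (M →ₗ[A] P₂) //
      ∀ (s : Module.End A M) (h : M →ₗ[A] P₁), G (h.comp s) = (G h).comp s } :=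
  ⟨AddMonoidHom.mk' (fun h => f.comp h) (fun h₁ h₂ => by ext x; simp), fun s h => by ext x; simp⟩

variable (A P₁ P₂)

def HomFaithful : Prop :=
  ∀ f : P₁ →ₗ[A] P₂, (∀ h : M →ₗ[A] P₁, f ∘ₗ h = 0) → f = 0

def HomFull : Prop :=
  ∀ G : (M →ₗ[A] P₁) →+ (M →ₗ[A] P₂),
    (∀ (s : Module.End A M) (h : M →ₗ[A] P₁), G (h ∘ₗ s) = G h ∘ₗ s) →
    ∃ f : P₁ →ₗ[A] P₂, ∀ h, f ∘ₗ h = G h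

theorem bijective_homMap_iff :
    Function.Bijective (homMap M : (P₁ →ₗ[A] P₂) → _) ↔
      HomFaithful A M P₁ P₂ ∧ HomFull A M P₁ P₂ := by
  have homMap_eq {f : P₁ →ₗ[A] P₂} {G} : homMap M f = G ↔ ∀ h, f ∘ₗ h = G.1 h := by
    rw [Subtype.ext_iff, AddMonoidHom.ext_iff]; rfl
  refine and_congr ⟨fun hinj f hf => hinj ?_, fun hfaith f₁ f₂ hf => ?_⟩
    ⟨fun hsurj G hG => ?_, fun hfull G => ?_⟩
  · exact homMap_eq.2 fun h => by simp [homMap, hf h]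
  · refine sub_eq_zero.1 (hfaith _ fun h => ?_)
    rw [LinearMap.sub_comp, sub_eq_zero]
    exact homMap_eq.1 hf h
  · obtain ⟨f, hf⟩ := hsurj ⟨G, hG⟩
    exact ⟨f, homMap_eq.1 hf⟩
  · obtain ⟨f, hf⟩ := hfull G.1 G.2
    exact ⟨f, homMap_eq.2 hf⟩

variable {A M P₁ P₂}

theorem HomFull.pi_right {ι : Type*} {Q : ι → Type*} [∀ i, AddCommGroup (Q i)]
    [∀ i, Module A (Q i)] (hfull : ∀ i, HomFull A M P₁ (Q i)) : HomFull A M P₁ (∀ i, Q i) := by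
  intro G hG
  choose f hf using fun i => hfull i
    ((LinearMap.compRight ℕ (LinearMap.proj i)).toAddMonoidHom.comp G)
    (fun s h => by simp [hG, LinearMap.comp_assoc])
  refine ⟨LinearMap.pi f, fun h => ?_⟩
  ext x i
  simpa using LinearMap.congr_fun (hf i h) x

theorem HomFull.pi_left {ι : Type*} [Fintype ι] [DecidableEq ι] {P : ι → Type*}
    [∀ i, AddCommGroup (P i)] [∀ i, Module A (P i)] (hfull : ∀ i, HomFull A M (P i) P₂) :
    HomFull A M (∀ i, P i) P₂ := by
  intro G hG
  choose f hf using fun i => hfull i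
    (G.comp (LinearMap.compRight ℕ (LinearMap.single A P i)).toAddMonoidHom)
    (fun s h => by simp [← hG, LinearMap.comp_assoc])
  refine ⟨LinearMap.lsum A P ℕ f, fun h => ?_⟩
  have h_eq : h = ∑ i, LinearMap.single A P i ∘ₗ LinearMap.proj i ∘ₗ h := by
    ext x j
    simp
  conv_rhs => rw [h_eq, map_sum]
  ext x
  simp only [LinearMap.lsum_apply, LinearMap.sum_apply, LinearMap.comp_apply]
  exact Finset.sum_congr rfl fun i _ => LinearMap.congr_fun (hf i (LinearMap.proj i ∘ₗ h)) x

theorem HomFull.of_retract {P₁' P₂' : Type*} [AddCommGroup P₁'] [AddCommGroup P₂']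
    [Module A P₁'] [Module A P₂'] (hfull : HomFull A M P₁' P₂')
    (i₁ : P₁ →ₗ[A] P₁') (r₁ : P₁' →ₗ[A] P₁) (h₁ : r₁ ∘ₗ i₁ = .id)
    (i₂ : P₂ →ₗ[A] P₂') (r₂ : P₂' →ₗ[A] P₂) (h₂ : r₂ ∘ₗ i₂ = .id) :
    HomFull A M P₁ P₂ := by
  intro G hG
  obtain ⟨f, hf⟩ := hfull
    ((LinearMap.compRight ℕ i₂).toAddMonoidHom.comp
      (G.comp (LinearMap.compRight ℕ r₁).toAddMonoidHom))
    (fun s h => by simp [← LinearMap.comp_assoc, hG])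
  refine ⟨r₂ ∘ₗ f ∘ₗ i₁, fun h => ?_⟩
  have hfi : f ∘ₗ i₁ ∘ₗ h = i₂ ∘ₗ G h := by
    simp [hf, ← LinearMap.comp_assoc, h₁]
  calc (r₂ ∘ₗ f ∘ₗ i₁) ∘ₗ h = r₂ ∘ₗ f ∘ₗ i₁ ∘ₗ h := rfl
    _ = G h := by rw [hfi, ← LinearMap.comp_assoc, h₂, LinearMap.id_comp]

theorem HomFull.of_finite_projective (hfull : HomFull A M A A)
    [Module.Finite A P₁] [Module.Projective A P₁] [Module.Finite A P₂] [Module.Projective A P₂] :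
    HomFull A M P₁ P₂ := by
  obtain ⟨n₁, r₁, hr₁⟩ := Module.Finite.exists_fin' A P₁
  obtain ⟨i₁, hi₁⟩ := Module.projective_lifting_property r₁ .id hr₁
  obtain ⟨n₂, r₂, hr₂⟩ := Module.Finite.exists_fin' A P₂
  obtain ⟨i₂, hi₂⟩ := Module.projective_lifting_property r₂ .id hr₂
  exact (HomFull.pi_left fun _ => HomFull.pi_right fun _ => hfull).of_retract i₁ r₁ hi₁ i₂ r₂ hi₂

theorem Module.Projective.eq_zero_of_forall_smul_eq_zero [Module.Projective A P₁]
    {ι : Type*} (r : ι → A) (hr : ∀ c : A, (∀ i, r i * c = 0) → c = 0)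
    {p : P₁} (hp : ∀ i, r i • p = 0) : p = 0 := by
  obtain ⟨s, hs⟩ := Module.projective_def'.1 ‹Module.Projective A P₁›
  have hsp : s p = 0 := by
    ext q
    exact hr _ fun i => by simpa using DFunLike.congr_fun (congrArg s (hp i)) q
  simpa [hsp] using (LinearMap.congr_fun hs p).symm

theorem homFaithful_of_projective [Module.Projective A P₂]
    (hM : ∀ c : A, (∀ (φ : M →ₗ[A] A) (x : M), φ x * c = 0) → c = 0) :
    HomFaithful A M P₁ P₂ := by
  intro f hf
  ext p
  refine Module.Projective.eq_zero_of_forall_smul_eq_zero (fun φx : (M →ₗ[A] A) × M => φx.1 φx.2)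
    (fun c hc => hM c fun φ x => hc (φ, x)) fun ⟨φ, x⟩ => ?_
  simpa using LinearMap.congr_fun (hf (φ.smulRight p)) x

end HomFunctor

def HasDoubleCentralizer (A M : Type*) [Ring A] [AddCommGroup M] [Module A M] : Prop :=
  ∀ g : M →+ M, (∀ (s : Module.End A M) (x : M), g (s x) = s (g x)) → ∃ a : A, ∀ x, g x = a • x

section HermitianDuality

variable {A M : Type*} [Ring A] [AddCommGroup M] [Module A M]

/-- `Φ` identifies `M` with its dual, and `(x, y) ↦ Φ x y` is a `σ`-hermitian form. -/
structure IsHermitianDuality (σ : A →+ A) (Φ : M ≃+ (M →ₗ[A] A)) : Prop where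
  map_smul (a : A) (x y : M) : Φ (a • x) y = Φ x y * σ a
  symm (x y : M) : σ (Φ x y) = Φ y x

namespace IsHermitianDuality

variable {σ : A →+ A} {Φ : M ≃+ (M →ₗ[A] A)} (hΦ : IsHermitianDuality σ Φ)
include hΦ

theorem symm_smul (a : A) (h : M →ₗ[A] A) :
    Φ.symm (LinearMap.toSpanSingleton A A (σ a) ∘ₗ h) = a • Φ.symm h :=
  Φ.symm_apply_eq.2 <| LinearMap.ext fun y => by simp [hΦ.map_smul]

def adjoint (s : Module.End A M) : Module.End A M where
  toFun x := Φ.symm (Φ x ∘ₗ s)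
  map_add' x y := by simp [LinearMap.add_comp]
  map_smul' a x := by
    rw [RingHom.id_apply, ← hΦ.symm_smul]
    congr 1
    ext y
    simp [hΦ.map_smul]

theorem apply_adjoint (s : Module.End A M) (x : M) : Φ (hΦ.adjoint s x) = Φ x ∘ₗ s :=
  Φ.apply_symm_apply _

theorem symm_comp (h : M →ₗ[A] A) (s : Module.End A M) :
    Φ.symm (h ∘ₗ s) = hΦ.adjoint s (Φ.symm h) :=
  Φ.symm_apply_eq.2 <| by rw [hΦ.apply_adjoint, Φ.apply_symm_apply]

theorem symm_comp_adjoint (h : M →ₗ[A] A) (s : Module.End A M) :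
    Φ.symm (h ∘ₗ hΦ.adjoint s) = s (Φ.symm h) := by
  refine Φ.symm_apply_eq.2 (LinearMap.ext fun y => ?_)
  calc h (hΦ.adjoint s y) = Φ (Φ.symm h) (hΦ.adjoint s y) := by rw [Φ.apply_symm_apply]
    _ = σ (Φ y (s (Φ.symm h))) := by rw [← hΦ.symm, hΦ.apply_adjoint, LinearMap.comp_apply]
    _ = Φ (s (Φ.symm h)) y := hΦ.symm _ _

theorem apply_map (s : Module.End A M) (x : M) : Φ (s x) = Φ x ∘ₗ hΦ.adjoint s :=
  Φ.symm.injective <| by rw [hΦ.symm_comp_adjoint, Φ.symm_apply_apply, Φ.symm_apply_apply]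

theorem hasDoubleCentralizer_iff (hσ : Function.Involutive σ) :
    HasDoubleCentralizer A M ↔ HomFull A M A A := by
  constructor
  · intro hD G hG
    obtain ⟨a, ha⟩ := hD (Φ.symm.toAddMonoidHom.comp (G.comp Φ.toAddMonoidHom)) fun s x => by
      simp only [AddMonoidHom.comp_apply, AddEquiv.coe_toAddMonoidHom]
      rw [hΦ.apply_map, hG, hΦ.symm_comp_adjoint]
    refine ⟨LinearMap.toSpanSingleton A A (σ a), fun h => Φ.symm.injective ?_⟩
    simpa [hΦ.symm_smul] using (ha (Φ.symm h)).symm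
  · intro hfull g hg
    obtain ⟨f, hf⟩ := hfull (Φ.toAddMonoidHom.comp (g.comp Φ.symm.toAddMonoidHom)) fun s h => by
      simp only [AddMonoidHom.comp_apply, AddEquiv.coe_toAddMonoidHom]
      rw [hΦ.symm_comp, hg, hΦ.apply_adjoint]
    have hf1 : f = LinearMap.toSpanSingleton A A (σ (σ (f 1))) :=
      LinearMap.ext_ring (by simp [hσ (f 1)])
    refine ⟨σ (f 1), fun x => ?_⟩
    calc g x = Φ.symm (f ∘ₗ Φ x) := by simp [hf]
      _ = Φ.symm (LinearMap.toSpanSingleton A A (σ (σ (f 1))) ∘ₗ Φ x) := by rw [← hf1]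
      _ = σ (f 1) • x := by rw [hΦ.symm_smul, Φ.symm_apply_apply]

theorem eq_zero_of_trace_mul_eq_zero (hσ : Function.Involutive σ)
    (hfaithful : ∀ a : A, (∀ x : M, a • x = 0) → a = 0) (c : A)
    (hc : ∀ (φ : M →ₗ[A] A) (x : M), φ x * c = 0) : c = 0 := by
  have hσc : σ c = 0 := hfaithful _ fun x => Φ.injective <| LinearMap.ext fun y => by
    simp [hΦ.map_smul, hσ c, hc]
  rw [← hσ c, hσc, map_zero]

end IsHermitianDuality

end HermitianDuality

section SelfDualModules

variable {A : Type*} [Ring A] {σ : A →+ A}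

theorem mul_idempotent_eq_self_of_mem_span {e x : A} (he : IsIdempotentElem e)
    (hx : x ∈ Submodule.span A {e}) : x * e = x := by
  obtain ⟨a, rfl⟩ := Submodule.mem_span_singleton.1 hx
  rw [smul_eq_mul, mul_assoc, he.eq]

variable (hmul : ∀ x y : A, σ (x * y) = σ y * σ x) (hσ : Function.Involutive σ)
  {e : A} (he : IsIdempotentElem e) (hσe : σ e = e)

include hmul he hσe in
theorem apply_generator_mem_span (h : Submodule.span A {e} →ₗ[A] A) :
    σ (h ⟨e, Submodule.mem_span_singleton_self e⟩) ∈ Submodule.span A {e} := by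
  set c := h ⟨e, Submodule.mem_span_singleton_self e⟩
  have hc : c = e * c := by
    rw [← smul_eq_mul, ← map_smul]
    exact congrArg h (Subtype.ext he.eq.symm)
  refine Submodule.mem_span_singleton.2 ⟨σ c, ?_⟩
  rw [smul_eq_mul, ← hσe, ← hmul, ← hc]

def spanDuality : Submodule.span A {e} ≃+ (Submodule.span A {e} →ₗ[A] A) where
  toFun x := LinearMap.toSpanSingleton A A (σ x) ∘ₗ (Submodule.span A {e}).subtype
  invFun h := ⟨σ (h ⟨e, Submodule.mem_span_singleton_self e⟩),
    apply_generator_mem_span hmul he hσe h⟩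
  left_inv x := Subtype.ext <| by
    simp [hmul, hσ x, hσe, mul_idempotent_eq_self_of_mem_span he x.2]
  right_inv h := LinearMap.ext fun y => by
    have hy : y = (y : A) • ⟨e, Submodule.mem_span_singleton_self e⟩ :=
      Subtype.ext (mul_idempotent_eq_self_of_mem_span he y.2).symm
    conv_rhs => rw [hy, map_smul]
    simp [hσ _]
  map_add' x y := by ext; simp [mul_add]

theorem isHermitianDuality_spanDuality :
    IsHermitianDuality σ (spanDuality hmul hσ he hσe) where
  map_smul a x y := by simp [spanDuality, hmul, mul_assoc]
  symm x y := by simp [spanDuality, hmul, hσ x]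

end SelfDualModules

section PiDuality

variable {A : Type*} [Ring A] {ι : Type*} [Fintype ι] [DecidableEq ι] {M : ι → Type*}
  [∀ i, AddCommGroup (M i)] [∀ i, Module A (M i)]

def piDuality (Φ : ∀ i, M i ≃+ (M i →ₗ[A] A)) : (∀ i, M i) ≃+ ((∀ i, M i) →ₗ[A] A) :=
  (AddEquiv.piCongrRight Φ).trans (LinearMap.lsum A M ℕ).toAddEquiv

theorem piDuality_apply (Φ : ∀ i, M i ≃+ (M i →ₗ[A] A)) (x y : ∀ i, M i) :
    piDuality Φ x y = ∑ i, Φ i (x i) (y i) := by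
  simp [piDuality]

theorem IsHermitianDuality.pi {σ : A →+ A} {Φ : ∀ i, M i ≃+ (M i →ₗ[A] A)}
    (hΦ : ∀ i, IsHermitianDuality σ (Φ i)) : IsHermitianDuality σ (piDuality Φ) where
  map_smul a x y := by simp [piDuality_apply, (hΦ _).map_smul, Finset.sum_mul]
  symm x y := by simp [piDuality_apply, (hΦ _).symm]

end PiDuality

theorem DCPModule.exists_isHermitianDuality {A : Type} [Ring A] {σ : A →+ A}
    (hmul : ∀ x y : A, σ (x * y) = σ y * σ x) (hσ : Function.Involutive σ) {t : ℕ}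
    {e : Fin t → A} (he : ∀ i, IsIdempotentElem (e i)) (hσe : ∀ i, σ (e i) = e i) :
    ∃ Φ : DCPModule A e ≃+ (DCPModule A e →ₗ[A] A), IsHermitianDuality σ Φ :=
  ⟨piDuality fun i => spanDuality hmul hσ (he i) (hσe i),
    IsHermitianDuality.pi fun i => isHermitianDuality_spanDuality hmul hσ (he i) (hσe i)⟩

/-- Lemma 1.5 in the paper. Let `k` be a commutative noetherian domain, `A` a
finitely generated unital `k`-algebra with an anti-involution `σ`, and `M = ⊕_{i=1}^t A e_i` a
faithful projective left `A`-module, where each `e_i` is a nonzero idempotent fixed by `σ`.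
Then the canonical ring homomorphism `A → End_{End_A(M)}(M)` is surjective (i.e. every additive
endomorphism of `M` commuting with `End_A(M)` is given by the action of some `a : A`) if and only
if for all finitely generated projective left `A`-modules `P₁, P₂` the natural map
`θ : Hom_A(P₁,P₂) → Hom_{End_A(M)}(Hom_A(M,P₁), Hom_A(M,P₂))`, `θ(f)(h) = f ∘ h`, is bijective;
here `Hom_{End_A(M)}` consists of the additive maps commuting with precomposition by `End_A(M)`. -/
theorem stmt_0
    (k : Type) [CommRing k]
    (A : Type) [Ring A] [Algebra k A]
    (σ : A →ₗ[k] A)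
    (hσ_mul : ∀ x y : A, σ (x * y) = σ y * σ x)
    (hσ_invol : ∀ x : A, σ (σ x) = x)
    (t : ℕ) (e : Fin t → A)
    (he_idem : ∀ i, e i * e i = e i)
    (he_star : ∀ i, σ (e i) = e i)
    (hfaithful : ∀ a : A, (∀ x : DCPModule A e, a • x = 0) → a = 0) :
    ((∀ g : DCPModule A e →+ DCPModule A e,
        (∀ (s : Module.End A (DCPModule A e)) (x : DCPModule A e), g (s x) = s (g x)) →
        ∃ a : A, ∀ x : DCPModule A e, g x = a • x)
      ↔
      ∀ (P₁ P₂ : Type) [AddCommGroup P₁] [AddCommGroup P₂] [Module A P₁] [Module A P₂]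
        [Module.Finite A P₁] [Module.Finite A P₂]
        [Module.Projective A P₁] [Module.Projective A P₂],
        Function.Bijective
          (fun f : P₁ →ₗ[A] P₂ =>
            (⟨AddMonoidHom.mk' (fun h : DCPModule A e →ₗ[A] P₁ => f.comp h)
                (fun h₁ h₂ => by ext x; simp),
              fun s h => by ext x; simp⟩ :
              { g : (DCPModule A e →ₗ[A] P₁) →+ (DCPModule A e →ₗ[A] P₂) //
                ∀ (s : Module.End A (DCPModule A e)) (h : DCPModule A e →ₗ[A] P₁),
                  g (h.comp s) = (g h).comp s }))) := by
  obtain ⟨Φ, hΦ⟩ := DCPModule.exists_isHermitianDuality (σ := σ.toAddMonoidHom)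
    hσ_mul hσ_invol he_idem he_star
  have htrace := hΦ.eq_zero_of_trace_mul_eq_zero hσ_invol hfaithful
  refine (hΦ.hasDoubleCentralizer_iff hσ_invol).trans
    ⟨fun hfull P₁ P₂ _ _ _ _ _ _ _ _ => ?_, fun hθ => ?_⟩
  · exact (bijective_homMap_iff A _ P₁ P₂).2
      ⟨homFaithful_of_projective htrace, hfull.of_finite_projective⟩
  · exact ((bijective_homMap_iff A _ A A).1 (hθ A A)).2
end

section
/- Let K be a field, A a finite-dimensional unital associative K-algebra, and T, M finitely generated left A-modules. Suppose there is a chain of submodules 0 = M₀ ⊆ M₁ ⊆ ⋯ ⊆ M_t = M such that for every 1 ≤ i ≤ t the restriction map Hom_A(M_i, T) → Hom_A(M_{i-1}, T), g ↦ g|_{M_{i-1}}, is surjective, and there exists a natural number a_i together with an injective A-module homomorphism M_i/M_{i-1} ↪ T^{⊕a_i}. Then there exists an injective A-module homomorphism M ↪ T^{⊕(a₁+⋯+a_t)}. -/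
/-- Let `K` be a field, `A` a finite-dimensional unital associative
`K`-algebra, and `T, M` finitely generated left `A`-modules. Suppose there is a chain of
submodules `0 = N 0 ⊆ N 1 ⊆ ⋯ ⊆ N t = M` such that for every `1 ≤ i ≤ t` the restriction map
`Hom_A(N i, T) → Hom_A(N (i-1), T)` is surjective and there is an embedding
`N i / N (i-1) ↪ T^{⊕ a i}`. Then there is an embedding `M ↪ T^{⊕(a 1 + ⋯ + a t)}`. -/
theorem stmt_3
    (K : Type) [Field K]
    (A : Type) [Ring A] [Algebra K A] [FiniteDimensional K A]
    (T M : Type)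
    [AddCommGroup T] [Module A T] [Module.Finite A T]
    [AddCommGroup M] [Module A M] [Module.Finite A M]
    (t : ℕ) (N : Fin (t + 1) → Submodule A M)
    (hbot : N 0 = ⊥) (htop : N (Fin.last t) = ⊤)
    (hle : ∀ i : Fin t, N i.castSucc ≤ N i.succ)
    (hres : ∀ i : Fin t,
      Function.Surjective fun g : (N i.succ) →ₗ[A] T =>
        g.comp (Submodule.inclusion (hle i)))
    (a : Fin t → ℕ)
    (hemb : ∀ i : Fin t,
      ∃ g : ((N i.succ) ⧸ ((N i.castSucc).comap (N i.succ).subtype)) →ₗ[A] (Fin (a i) → T),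
        Function.Injective g) :
    ∃ φ : M →ₗ[A] (Fin (∑ i, a i) → T), Function.Injective φ := by
  classical
  set f : ℕ → ℕ := fun j => if h : j < t then a ⟨j, h⟩ else 0 with hf
  suffices h : ∀ n (hn : n ≤ t),
      ∃ φ : (N ⟨n, Nat.lt_succ_of_le hn⟩) →ₗ[A]
        (Fin (∑ j ∈ Finset.range n, f j) → T), Function.Injective φ by
    obtain ⟨φ, hφ⟩ := h t le_rfl
    have hsum : (∑ j ∈ Finset.range t, f j) = ∑ i, a i := by
      rw [← Fin.sum_univ_eq_sum_range f t]
      exact Finset.sum_congr rfl fun i _ => by simp [hf, i.isLt]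
    have e1 : M ≃ₗ[A] (N (⟨t, Nat.lt_succ_of_le le_rfl⟩ : Fin (t+1))) :=
      (Submodule.topEquiv.symm).trans (LinearEquiv.ofEq ⊤ _ htop.symm)
    have e2 : (Fin (∑ j ∈ Finset.range t, f j) → T) ≃ₗ[A] (Fin (∑ i, a i) → T) :=
      LinearEquiv.funCongrLeft A T (finCongr hsum.symm)
    exact ⟨e2.toLinearMap ∘ₗ φ ∘ₗ e1.toLinearMap,
      e2.injective.comp (hφ.comp e1.injective)⟩
  intro n
  induction n with
  | zero =>
    intro hn
    refine ⟨0, fun x y hxy => ?_⟩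
    have h0 : (⟨0, Nat.lt_succ_of_le hn⟩ : Fin (t+1)) = 0 := rfl
    have hb0 : N ⟨0, Nat.lt_succ_of_le hn⟩ ≤ ⊥ := by rw [h0]; exact hbot.le
    have hx : (x : M) = 0 := Submodule.mem_bot A |>.mp (hb0 x.2)
    have hy : (y : M) = 0 := Submodule.mem_bot A |>.mp (hb0 y.2)
    exact Subtype.ext (hx.trans hy.symm)
  | succ n ih =>
    intro hn
    have hnt : n < t := hn
    set i : Fin t := ⟨n, hnt⟩ with hi
    set b := ∑ j ∈ Finset.range n, f j with hb
    obtain ⟨φ, hφ⟩ := ih (Nat.le_of_lt hnt)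
    -- φ is defined on N i.castSucc up to definitional equality
    choose g hg using fun k : Fin b =>
      hres i ((LinearMap.proj k).comp (φ : (N i.castSucc) →ₗ[A] (Fin b → T)))
    set ψ : (N i.succ) →ₗ[A] (Fin b → T) := LinearMap.pi g with hψ
    obtain ⟨q, hq⟩ := hemb i
    set χ : (N i.succ) →ₗ[A] (Fin (a i) → T) :=
      q.comp (((N i.castSucc).comap (N i.succ).subtype).mkQ) with hχ
    have hinj : Function.Injective (ψ.prod χ) := by
      rw [injective_iff_map_eq_zero]
      intro x hx
      have hx1 : ψ x = 0 := congrArg Prod.fst hx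
      have hx2 : χ x = 0 := congrArg Prod.snd hx
      have hmk : (((N i.castSucc).comap (N i.succ).subtype).mkQ) x = 0 := by
        apply hq
        rw [map_zero]; exact hx2
      have hmem : (x : M) ∈ N i.castSucc := by
        rwa [Submodule.mkQ_apply, Submodule.Quotient.mk_eq_zero, Submodule.mem_comap] at hmk
      set y : N i.castSucc := ⟨(x : M), hmem⟩ with hy
      have hincl : Submodule.inclusion (hle i) y = x := rfl
      have hψx : (φ : (N i.castSucc) →ₗ[A] (Fin b → T)) y = 0 := by
        funext k
        have h1 : g k (Submodule.inclusion (hle i) y)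
            = (φ : (N i.castSucc) →ₗ[A] (Fin b → T)) y k :=
          LinearMap.congr_fun (hg k) y
        have h2 : ψ x k = 0 := congrFun hx1 k
        rw [← h1, hincl]
        exact h2
      have hy0 : y = 0 := hφ (hψx.trans (map_zero (φ : (N i.castSucc) →ₗ[A] (Fin b → T))).symm)
      have hxv : (x : M) = 0 := congrArg Subtype.val hy0
      exact Subtype.ext hxv
    have hsum2 : (∑ j ∈ Finset.range (n+1), f j) = b + a i := by
      rw [Finset.sum_range_succ, ← hb]
      simp [hf, hnt, hi]
    have E : ((Fin b → T) × (Fin (a i) → T)) ≃ₗ[A]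
        (Fin (∑ j ∈ Finset.range (n+1), f j) → T) :=
      (LinearEquiv.sumArrowLequivProdArrow _ _ A T).symm.trans
        (LinearEquiv.funCongrLeft A T ((finCongr hsum2).trans finSumFinEquiv.symm))
    exact ⟨E.toLinearMap ∘ₗ (ψ.prod χ), E.injective.comp hinj⟩
end

section
/- Let K be a field, A a finite-dimensional unital associative K-algebra, and T a finitely generated left A-module. Suppose there exist a natural number a and an injective A-module homomorphism δ₀ : A ↪ T^{⊕a}, and suppose N₁, …, N_t are finitely generated left A-modules such that for each 1 ≤ j ≤ t there exist a natural number r_j and a surjective A-module homomorphism π_j : T^{⊕r_j} ↠ N_j. Then there exist a natural number r' and an injective A-module homomorphism δ : A ↪ T^{⊕r'} such that for each 1 ≤ j ≤ t the induced map Hom_A(T^{⊕r'}, N_j) → Hom_A(A, N_j), g ↦ g ∘ δ, is surjective. -/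
/-- Multiplication by a central element as an `A`-linear endomorphism. -/
def centralSmul {A : Type*} [Ring A] {M : Type*} [AddCommGroup M] [Module A M]
    (c : A) (hc : ∀ b : A, c * b = b * c) : M →ₗ[A] M where
  toFun y := c • y
  map_add' := smul_add c
  map_smul' b y := by simp [← mul_smul, hc]

/-- Let `K` be a field, `A` a finite-dimensional unital associative
`K`-algebra and `T` a finitely generated left `A`-module. Suppose there is an embedding
`δ₀ : A ↪ T^{⊕a}` and `N 1, …, N t` are finitely generated left `A`-modules with surjections
`π j : T^{⊕ r j} ↠ N j`. Then there exist `r' : ℕ` and an embedding `δ : A ↪ T^{⊕ r'}` such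
that for each `j` the induced map `Hom_A(T^{⊕ r'}, N j) → Hom_A(A, N j)`, `g ↦ g ∘ δ`, is
surjective. -/
theorem stmt_5
    (K : Type) [Field K]
    (A : Type) [Ring A] [Algebra K A] [FiniteDimensional K A]
    (T : Type) [AddCommGroup T] [Module A T] [Module.Finite A T]
    (t : ℕ) (N : Fin t → Type)
    [∀ j, AddCommGroup (N j)] [∀ j, Module A (N j)] [∀ j, Module.Finite A (N j)]
    (a : ℕ) (δ₀ : A →ₗ[A] (Fin a → T)) (hδ₀ : Function.Injective δ₀)
    (r : Fin t → ℕ) (π : ∀ j, (Fin (r j) → T) →ₗ[A] N j)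
    (hπ : ∀ j, Function.Surjective (π j)) :
    ∃ (r' : ℕ) (δ : A →ₗ[A] (Fin r' → T)),
      Function.Injective δ ∧
        ∀ j, Function.Surjective fun g : (Fin r' → T) →ₗ[A] N j => g.comp δ := by
  classical
  -- spanning sets over K
  have key : ∀ j, ∃ (m : ℕ) (s : Fin m → N j),
      ∀ n : N j, ∃ c : Fin m → K, n = ∑ i, (algebraMap K A (c i)) • s i := by
    intro j
    letI : Module K (N j) := Module.compHom (N j) (algebraMap K A)
    haveI : IsScalarTower K A (N j) := ⟨fun c b y => by
      show (c • b) • y = algebraMap K A c • (b • y)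
      rw [Algebra.smul_def, mul_smul]⟩
    haveI : Module.Finite K (N j) := Module.Finite.trans A (N j)
    obtain ⟨m, s, hs⟩ := Module.Finite.exists_fin (R := K) (M := N j)
    refine ⟨m, s, fun n => ?_⟩
    have hn : n ∈ Submodule.span K (Set.range s) := hs ▸ Submodule.mem_top
    rw [Submodule.mem_span_range_iff_exists_fun] at hn
    obtain ⟨c, hc⟩ := hn
    refine ⟨c, ?_⟩
    rw [← hc]
    exact Finset.sum_congr rfl fun i _ => (algebraMap_smul A (c i) (s i)).symm
  choose m s hs using key
  choose x hx using fun j i => hπ j (s j i)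
  -- the big index type
  set ι := (Fin a) ⊕ (Σ j : Fin t, Fin (m j) × Fin (r j)) with hι
  let e : Fin (Fintype.card ι) ≃ ι := (Fintype.equivFin ι).symm
  -- combined map
  let δfull : A →ₗ[A] (ι → T) := LinearMap.pi fun i =>
    Sum.rec (fun k => (LinearMap.proj k).comp δ₀)
      (fun p => LinearMap.toSpanSingleton A T (x p.1 p.2.1 p.2.2)) i
  let δ : A →ₗ[A] (Fin (Fintype.card ι) → T) := (LinearMap.funLeft A T e).comp δfull
  refine ⟨Fintype.card ι, δ, ?_, ?_⟩
  · intro b₁ b₂ hb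
    apply hδ₀
    funext k
    have := congrFun hb (e.symm (Sum.inl k))
    simpa [δ, δfull, LinearMap.funLeft, Function.comp] using this
  · intro j f
    obtain ⟨c, hc⟩ := hs j (f 1)
    -- block projection
    let block : ∀ i : Fin (m j), (ι → T) →ₗ[A] (Fin (r j) → T) := fun i =>
      LinearMap.pi fun k => LinearMap.proj (Sum.inr ⟨j, i, k⟩ : ι)
    let g : (ι → T) →ₗ[A] N j := ∑ i : Fin (m j),
      (centralSmul (algebraMap K A (c i)) (Algebra.commutes (c i))).comp
        ((π j).comp (block i))
    refine ⟨g.comp (LinearMap.funLeft A T e.symm), LinearMap.ext fun b => ?_⟩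
    have h1 : ∀ b : A, (LinearMap.funLeft A T e.symm) (δ b) = δfull b := by
      intro b; funext i
      simp [δ, LinearMap.funLeft, Function.comp]
    simp only [LinearMap.comp_apply, h1]
    have h2 : ∀ i : Fin (m j), block i (δfull b) = b • x j i := by
      intro i; funext k
      simp [block, δfull, LinearMap.toSpanSingleton, LinearMap.smulRight]
    have h3 : g (δfull b) = b • f 1 := by
      simp only [g, LinearMap.sum_apply, LinearMap.comp_apply, h2, map_smul]
      rw [hc, Finset.smul_sum]
      refine Finset.sum_congr rfl fun i _ => ?_
      rw [hx]
      rfl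
    rw [h3, ← map_smul, smul_eq_mul, mul_one]
end
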